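/- Let p₀, p₁, p : [0, T_E] → [0,1], let t₁, …, t_K ∈ [0, T_E], and set h_k = 1 if p₁(t_k) ≥ p₀(t_k) and h_k = −1 otherwise. Let r > 0 and m > 0 and assume: (i) Σ_{k=1}^K |p₁(t_k) − p₀(t_k)| > rK; (ii) sup_{0 ≤ t ≤ T_E} |p(t) − p₁(t)| ≤ r/4; (iii) 2m√K ≤ rK/4. Let e₁, …, e_K be independent random variables with e_k ∈ {0,1} and E[e_k] = p(t_k). Then Pr( Σ_{k=1}^K h_k·(e_k − p₀(t_k)) ≤ 2m·√K ) ≤ exp(−r²K/8). -/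

import Mathlib

/-!
With `Z_k = h_k (p(t_k) - e_k)`, the variables `Z_k` are independent, centred and take values
in `[-1, 1]`. Since `|p - p₁| ≤ r/4` on `[0, T_E]`, the drift `∑ h_k (p(t_k) - p₀(t_k))` is at
least `∑ |p₁(t_k) - p₀(t_k)| - rK/4 > 3rK/4`, so on the event in question `∑ Z_k ≥ rK/2`.
Hoeffding's inequality bounds the probability of this by `exp (-2 (rK/2)² / (4K)) = exp (-r²K/8)`.
-/

open MeasureTheory ProbabilityTheory

theorem measureReal_sum_sub_integral_ge_le_of_mem_Icc {Ω ι : Type*} [MeasurableSpace Ω]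
    {μ : Measure Ω} [IsProbabilityMeasure μ] {X : ι → Ω → ℝ} (hind : iIndepFun X μ)
    (hX : ∀ i, AEMeasurable (X i) μ) {a b : ℝ} (hab : ∀ i, ∀ᵐ ω ∂μ, X i ω ∈ Set.Icc a b)
    (s : Finset ι) {ε : ℝ} (hε : 0 ≤ ε) :
    μ.real {ω | ε ≤ ∑ i ∈ s, (X i ω - μ[X i])} ≤
      Real.exp (-2 * ε ^ 2 / (s.card * (b - a) ^ 2)) := by
  have hcentered := hind.comp (fun i x ↦ x - μ[X i]) fun _ ↦ measurable_id.sub_const _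
  refine (HasSubgaussianMGF.measure_sum_ge_le_of_iIndepFun hcentered
    (fun i _ ↦ hasSubgaussianMGF_of_mem_Icc (hX i) (hab i)) hε).trans_eq ?_
  congr 1
  push_cast
  rw [Finset.sum_const, nsmul_eq_mul, Real.norm_eq_abs, div_pow, sq_abs,
    show (2 : ℝ) * (s.card * ((b - a) ^ 2 / 2 ^ 2)) = s.card * (b - a) ^ 2 / 2 by ring,
    div_div_eq_mul_div]
  ring

theorem abs_sub_sub_le_ite_mul_sub {a b c δ : ℝ} (hc : |c - b| ≤ δ) :
    |b - a| - δ ≤ (if a ≤ b then 1 else -1) * (c - a) := by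
  obtain ⟨hlo, hhi⟩ := abs_le.mp hc
  split_ifs with hab
  · rw [abs_of_nonneg (sub_nonneg.mpr hab)]; linarith
  · rw [abs_of_neg (by linarith)]; linarith

theorem sum_abs_sub_sub_le_sum_ite_mul_sub {ι : Type*} (s : Finset ι) {a b c : ι → ℝ} {δ : ℝ}
    (hc : ∀ i ∈ s, |c i - b i| ≤ δ) :
    ∑ i ∈ s, |b i - a i| - s.card * δ ≤ ∑ i ∈ s, (if a i ≤ b i then 1 else -1) * (c i - a i) := by
  rw [← nsmul_eq_mul, ← Finset.sum_const, ← Finset.sum_sub_distrib]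
  exact Finset.sum_le_sum fun i hi ↦ abs_sub_sub_le_ite_mul_sub (hc i hi)

theorem stmt9_general {Ω : Type*} [MeasurableSpace Ω] (μ : Measure Ω) [IsProbabilityMeasure μ]
    (T_E : ℝ) (p₀ p₁ p : ℝ → ℝ)
    (K : ℕ) (hK : 0 < K) (t : Fin K → ℝ) (ht : ∀ k, t k ∈ Set.Icc 0 T_E)
    (h : Fin K → ℝ) (hdef : ∀ k, h k = if p₀ (t k) ≤ p₁ (t k) then (1:ℝ) else -1)
    (r m : ℝ) (hr : 0 < r)
    (hsep : ∑ k, |p₁ (t k) - p₀ (t k)| > r * K)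
    (hclose : ∀ s ∈ Set.Icc 0 T_E, |p s - p₁ s| ≤ r / 4)
    (hmK : 2 * m * Real.sqrt K ≤ r * K / 4)
    (e : Fin K → Ω → ℝ) (he : ∀ k, Measurable (e k))
    (hval : ∀ k ω, e k ω = 0 ∨ e k ω = 1)
    (hindep : iIndepFun e μ)
    (hmean : ∀ k, ∫ ω, e k ω ∂μ = p (t k)) :
    μ {ω | ∑ k, h k * (e k ω - p₀ (t k)) ≤ 2 * m * Real.sqrt K}
      ≤ ENNReal.ofReal (Real.exp (-(r ^ 2) * K / 8)) := by
  have hsign : ∀ k, h k = 1 ∨ h k = -1 := fun k ↦ by rw [hdef k]; split_ifs <;> simp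
  set Z : Fin K → Ω → ℝ := fun k ω ↦ -(h k * e k ω)
  have hZ_mem : ∀ k, ∀ᵐ ω ∂μ, Z k ω ∈ Set.Icc (-1) 1 := fun k ↦ ae_of_all _ fun ω ↦ by
    rcases hval k ω with he | he <;> rcases hsign k with hk | hk <;> simp [Z, he, hk]
  have hZ_mean : ∀ k, μ[Z k] = -(h k * p (t k)) := fun k ↦ by
    simp only [Z, integral_neg, integral_const_mul, hmean]
  have hdrift := sum_abs_sub_sub_le_sum_ite_mul_sub Finset.univ (a := fun k ↦ p₀ (t k))
    (b := fun k ↦ p₁ (t k)) (c := fun k ↦ p (t k)) fun k _ ↦ hclose (t k) (ht k)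
  have hsub : {ω | ∑ k, h k * (e k ω - p₀ (t k)) ≤ 2 * m * Real.sqrt K}
      ⊆ {ω | r * K / 2 ≤ ∑ k, (Z k ω - μ[Z k])} := fun ω hω ↦ by
    have hsplit : ∑ k, (Z k ω - μ[Z k])
        = ∑ k, h k * (p (t k) - p₀ (t k)) - ∑ k, h k * (e k ω - p₀ (t k)) := by
      rw [← Finset.sum_sub_distrib]
      exact Finset.sum_congr rfl fun k _ ↦ by rw [hZ_mean]; ring
    simp only [Set.mem_ofPred_eq, Finset.card_univ, Fintype.card_fin, ← hdef] at hω hdrift ⊢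
    linarith
  have hHoeffding := measureReal_sum_sub_integral_ge_le_of_mem_Icc
    (hindep.comp (fun k x ↦ -(h k * x)) fun _ ↦ (measurable_id.const_mul _).neg)
    (fun k ↦ ((he k).const_mul _).neg.aemeasurable) hZ_mem Finset.univ
    (by positivity : 0 ≤ r * K / 2)
  calc _ ≤ μ {ω | r * K / 2 ≤ ∑ k, (Z k ω - μ[Z k])} := measure_mono hsub
    _ = ENNReal.ofReal (μ.real {ω | r * K / 2 ≤ ∑ k, (Z k ω - μ[Z k])}) :=
        (ofReal_measureReal ..).symm
    _ ≤ _ := by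
      refine ENNReal.ofReal_le_ofReal (hHoeffding.trans_eq ?_)
      have hK' : (K : ℝ) ≠ 0 := Nat.cast_ne_zero.mpr hK.ne'
      rw [Finset.card_univ, Fintype.card_fin]
      field_simp
      norm_num

/-- Type-II error bound for the consistency tests: if `Σ_k |p₁(t_k) − p₀(t_k)| > rK`,
`sup_{[0,T_E]} |p − p₁| ≤ r/4`, and `2m√K ≤ rK/4`, then for independent Bernoulli
variables `e_k` with means `p(t_k)` and signs `h_k = sign(p₁(t_k) − p₀(t_k))`,
`Pr(Σ h_k (e_k − p₀(t_k)) ≤ 2m√K) ≤ exp(−r²K/8)`. -/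
theorem stmt9 {Ω : Type*} [MeasurableSpace Ω] (μ : Measure Ω) [IsProbabilityMeasure μ]
    (T_E : ℝ) (hT : 0 < T_E) (p₀ p₁ p : ℝ → ℝ)
    (hp₀ : ∀ t ∈ Set.Icc 0 T_E, p₀ t ∈ Set.Icc (0:ℝ) 1)
    (hp₁ : ∀ t ∈ Set.Icc 0 T_E, p₁ t ∈ Set.Icc (0:ℝ) 1)
    (hp : ∀ t ∈ Set.Icc 0 T_E, p t ∈ Set.Icc (0:ℝ) 1)
    (K : ℕ) (hK : 0 < K) (t : Fin K → ℝ) (ht : ∀ k, t k ∈ Set.Icc 0 T_E)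
    (h : Fin K → ℝ) (hdef : ∀ k, h k = if p₀ (t k) ≤ p₁ (t k) then (1:ℝ) else -1)
    (r m : ℝ) (hr : 0 < r) (hm : 0 < m)
    (hsep : ∑ k, |p₁ (t k) - p₀ (t k)| > r * K)
    (hclose : ∀ s ∈ Set.Icc 0 T_E, |p s - p₁ s| ≤ r / 4)
    (hmK : 2 * m * Real.sqrt K ≤ r * K / 4)
    (e : Fin K → Ω → ℝ) (he : ∀ k, Measurable (e k))
    (hval : ∀ k ω, e k ω = 0 ∨ e k ω = 1)
    (hindep : iIndepFun e μ)
    (hmean : ∀ k, ∫ ω, e k ω ∂μ = p (t k)) :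
    μ {ω | ∑ k, h k * (e k ω - p₀ (t k)) ≤ 2 * m * Real.sqrt K}
      ≤ ENNReal.ofReal (Real.exp (-(r ^ 2) * K / 8)) :=
  stmt9_general μ T_E p₀ p₁ p K hK t ht h hdef r m hr hsep hclose hmK e he hval hindep hmean
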